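/- arXiv:1305.0162 — 4 statements merged into one kernel-verified Lean document; each statement's English description precedes it below -/
import Mathlib

section
/- Let f : ℝⁿ \ {0} → ℝ be smooth, harmonic (Δf = 0), and Euler-homogeneous of degree a, i.e. x·∇f = a·f, where a = 1 - ℓ - n/2 for a positive integer ℓ. Then the function |x|^(2ℓ) · f is also harmonic on ℝⁿ \ {0}. -/
open scoped BigOperators

/-- Partial derivative in the `i`-th coordinate direction. -/
noncomputable def pder (n : ℕ) (i : Fin n) (f : (Fin n → ℝ) → ℝ) : (Fin n → ℝ) → ℝ :=
  fun x => fderiv ℝ f x (Pi.single i 1)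

/-- The Euclidean Laplacian `Δf = Σᵢ ∂ᵢ∂ᵢ f` on `ℝⁿ`. -/
noncomputable def lap (n : ℕ) (f : (Fin n → ℝ) → ℝ) : (Fin n → ℝ) → ℝ :=
  fun x => ∑ i, pder n i (pder n i f) x

/-- The Euler operator `x·∇f = Σᵢ xᵢ ∂ᵢ f` on `ℝⁿ`. -/
noncomputable def euler (n : ℕ) (f : (Fin n → ℝ) → ℝ) : (Fin n → ℝ) → ℝ :=
  fun x => ∑ i, x i * pder n i f x

open Filter


lemma pder_congr {n : ℕ} {i : Fin n} {f g : (Fin n → ℝ) → ℝ} {x}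
    (h : f =ᶠ[nhds x] g) : pder n i f x = pder n i g x := by
  simp [pder, h.fderiv_eq]

lemma pder_mul {n : ℕ} {i : Fin n} {f g : (Fin n → ℝ) → ℝ} {x}
    (hf : DifferentiableAt ℝ f x) (hg : DifferentiableAt ℝ g x) :
    pder n i (fun y => f y * g y) x = pder n i f x * g x + f x * pder n i g x := by
  simp [pder, fderiv_fun_mul hf hg]; ring

lemma pder_add {n : ℕ} {i : Fin n} {f g : (Fin n → ℝ) → ℝ} {x}
    (hf : DifferentiableAt ℝ f x) (hg : DifferentiableAt ℝ g x) :
    pder n i (fun y => f y + g y) x = pder n i f x + pder n i g x := by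
  simp [pder, fderiv_fun_add hf hg]

lemma pder_contDiffAt {n : ℕ} {i : Fin n} {f : (Fin n → ℝ) → ℝ} {x}
    (hf : ContDiffAt ℝ (⊤ : ℕ∞) f x) : ContDiffAt ℝ (⊤ : ℕ∞) (pder n i f) x := by
  have h1 : ContDiffAt ℝ (⊤ : ℕ∞) (fderiv ℝ f) x := hf.fderiv_right (by simp)
  exact (ContinuousLinearMap.apply ℝ ℝ (Pi.single i 1 : Fin n → ℝ)).contDiff.contDiffAt.comp x h1

lemma hasFDerivAt_coord {n : ℕ} (j : Fin n) (x : Fin n → ℝ) :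
    HasFDerivAt (fun y : Fin n → ℝ => y j)
      (ContinuousLinearMap.proj j : (Fin n → ℝ) →L[ℝ] ℝ) x :=
  (ContinuousLinearMap.proj j : (Fin n → ℝ) →L[ℝ] ℝ).hasFDerivAt

lemma hasFDerivAt_Q {n : ℕ} (x : Fin n → ℝ) :
    HasFDerivAt (fun y : Fin n → ℝ => ∑ j, y j ^ 2)
      (∑ j, (2 * x j) • (ContinuousLinearMap.proj j : (Fin n → ℝ) →L[ℝ] ℝ)) x := by
  apply HasFDerivAt.fun_sum
  intro j _
  have h := (hasDerivAt_pow 2 (x j)).comp_hasFDerivAt x (hasFDerivAt_coord j x)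
  simpa [Function.comp_def] using h

lemma hasFDerivAt_Qpow {n : ℕ} (m : ℕ) (x : Fin n → ℝ) :
    HasFDerivAt (fun y : Fin n → ℝ => (∑ j, y j ^ 2) ^ m)
      (((m : ℝ) * (∑ j, x j ^ 2) ^ (m - 1)) •
        ∑ j, (2 * x j) • (ContinuousLinearMap.proj j : (Fin n → ℝ) →L[ℝ] ℝ)) x :=
  (hasDerivAt_pow m _).comp_hasFDerivAt x (hasFDerivAt_Q x)

lemma pder_Qpow {n : ℕ} (m : ℕ) (i : Fin n) (x : Fin n → ℝ) :
    pder n i (fun y => (∑ j, y j ^ 2) ^ m) x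
      = m * (∑ j, x j ^ 2) ^ (m - 1) * (2 * x i) := by
  rw [pder, (hasFDerivAt_Qpow m x).fderiv]
  simp [ContinuousLinearMap.sum_apply, Pi.single_apply, Finset.sum_ite_eq', mul_comm]

lemma diff_Qpow {n : ℕ} (m : ℕ) (x : Fin n → ℝ) :
    DifferentiableAt ℝ (fun y : Fin n → ℝ => (∑ j, y j ^ 2) ^ m) x :=
  (hasFDerivAt_Qpow m x).differentiableAt

lemma pder_coord {n : ℕ} (i : Fin n) (x : Fin n → ℝ) :
    pder n i (fun y => y i) x = 1 := by
  rw [pder, (hasFDerivAt_coord i x).fderiv]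
  simp

lemma pder_const_mul {n : ℕ} {i : Fin n} {f : (Fin n → ℝ) → ℝ} {x} (c : ℝ)
    (hf : DifferentiableAt ℝ f x) :
    pder n i (fun y => c * f y) x = c * pder n i f x := by
  simp [pder, fderiv_const_mul hf]

lemma cast_mul_pow_pred (m : ℕ) (q : ℝ) : (m : ℝ) * q ^ (m - 1) * q = (m : ℝ) * q ^ m := by
  cases m with
  | zero => simp
  | succ k => rw [Nat.add_sub_cancel, pow_succ]; ring

/-- If `f` is smooth on `ℝⁿ \ {0}`, harmonic, and Euler-homogeneous of degree
`a = 1 - ℓ - n/2` for a positive integer `ℓ`, then `|x|^(2ℓ) f` is harmonic on `ℝⁿ \ {0}`. -/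
theorem harmonic_normSq_pow_mul (n ℓ : ℕ) (hn : 1 ≤ n) (hℓ : 1 ≤ ℓ)
    (f : (Fin n → ℝ) → ℝ)
    (hf : ∀ x : Fin n → ℝ, x ≠ 0 → ContDiffAt ℝ (⊤ : ℕ∞) f x)
    (hharm : ∀ x : Fin n → ℝ, x ≠ 0 → lap n f x = 0)
    (hhom : ∀ x : Fin n → ℝ, x ≠ 0 →
      euler n f x = (1 - (ℓ : ℝ) - (n : ℝ) / 2) * f x) :
    ∀ x : Fin n → ℝ, x ≠ 0 → lap n (fun y => (∑ i, y i ^ 2) ^ ℓ * f y) x = 0 := by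
  obtain ⟨m, rfl⟩ : ∃ m, ℓ = m + 1 := ⟨ℓ - 1, (Nat.succ_pred_eq_of_pos hℓ).symm⟩
  intro x hx
  have hU : IsOpen {y : Fin n → ℝ | y ≠ 0} := isOpen_ne
  have hfx : ContDiffAt ℝ (⊤ : ℕ∞) f x := hf x hx
  have dfx : DifferentiableAt ℝ f x := hfx.differentiableAt (by simp)
  have dpf : ∀ i : Fin n, DifferentiableAt ℝ (pder n i f) x :=
    fun i => (pder_contDiffAt hfx).differentiableAt (by simp)
  have dcoord : ∀ i : Fin n, DifferentiableAt ℝ (fun y : Fin n → ℝ => y i) x :=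
    fun i => (hasFDerivAt_coord i x).differentiableAt
  set q : ℝ := ∑ j, x j ^ 2 with hq
  -- eventual expression for the first derivative
  have hev : ∀ i : Fin n, (pder n i (fun y => (∑ j, y j ^ 2) ^ (m + 1) * f y))
      =ᶠ[nhds x] fun y =>
        ((m : ℝ) + 1) * ((∑ j, y j ^ 2) ^ m) * (2 * y i) * f y
          + (∑ j, y j ^ 2) ^ (m + 1) * pder n i f y := by
    intro i
    filter_upwards [hU.mem_nhds hx] with y hy
    rw [pder_mul (diff_Qpow (m + 1) y) ((hf y hy).differentiableAt (by simp)), pder_Qpow]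
    push_cast
    norm_num
  have key : ∀ i : Fin n,
      pder n i (pder n i (fun y => (∑ j, y j ^ 2) ^ (m + 1) * f y)) x
      = ((((m : ℝ) + 1) * ((m : ℝ) * q ^ (m - 1) * (2 * x i)) * (2 * x i)
            + ((m : ℝ) + 1) * q ^ m * 2) * f x
          + (((m : ℝ) + 1) * q ^ m * (2 * x i)) * pder n i f x)
        + ((((m : ℝ) + 1) * q ^ m * (2 * x i)) * pder n i f x
            + q ^ (m + 1) * pder n i (pder n i f) x) := by
    intro i
    have dB : DifferentiableAt ℝ (fun y : Fin n → ℝ => ((m : ℝ) + 1) * (∑ j, y j ^ 2) ^ m) x :=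
      (diff_Qpow m x).const_mul _
    have dC : DifferentiableAt ℝ (fun y : Fin n → ℝ => 2 * y i) x := (dcoord i).const_mul 2
    have dA : DifferentiableAt ℝ
        (fun y : Fin n → ℝ => ((m : ℝ) + 1) * (∑ j, y j ^ 2) ^ m * (2 * y i)) x := dB.mul dC
    rw [pder_congr (hev i),
      pder_add (dA.fun_mul dfx) ((diff_Qpow (m + 1) x).fun_mul (dpf i)),
      pder_mul dA dfx,
      pder_mul (diff_Qpow (m + 1) x) (dpf i),
      pder_Qpow,
      pder_mul dB dC,
      pder_const_mul _ (diff_Qpow m x),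
      pder_Qpow,
      pder_const_mul 2 (dcoord i),
      pder_coord]
    push_cast
    norm_num
    rfl
  have hpt : ∀ i : Fin n,
      pder n i (pder n i (fun y => (∑ j, y j ^ 2) ^ (m + 1) * f y)) x
      = (4 * ((m : ℝ) + 1) * ((m : ℝ) * q ^ (m - 1)) * f x) * x i ^ 2
        + 2 * ((m : ℝ) + 1) * q ^ m * f x
        + (4 * ((m : ℝ) + 1) * q ^ m) * (x i * pder n i f x)
        + q ^ (m + 1) * pder n i (pder n i f) x := by
    intro i; rw [key i]; ring
  have hh := hharm x hx
  have he := hhom x hx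
  simp only [lap, euler] at hh he ⊢
  rw [Finset.sum_congr rfl (fun i _ => hpt i), Finset.sum_add_distrib,
    Finset.sum_add_distrib, Finset.sum_add_distrib, ← Finset.mul_sum, ← Finset.mul_sum,
    ← Finset.mul_sum, ← Finset.mul_sum, Finset.sum_const, Finset.card_univ, Fintype.card_fin,
    hh, he, nsmul_eq_mul]
  have hpred := cast_mul_pow_pred m q
  push_cast
  linear_combination (4 * ((m : ℝ) + 1) * f x) * hpred
end

section
/- For every positive integer ℓ and every smooth function f : ℝⁿ → ℝ, Δ^ℓ(|x|² · f) = |x|² · Δ^ℓ f + 4ℓ · Δ^(ℓ-1)(x·∇f) + 2ℓ(n - 2ℓ + 2) · Δ^(ℓ-1) f. -/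
open scoped BigOperators

namespace LapAux

variable {n : ℕ} {f g : (Fin n → ℝ) → ℝ} {x : Fin n → ℝ}

lemma pder_contDiff (i : Fin n) (hf : ContDiff ℝ (⊤ : ℕ∞) f) : ContDiff ℝ (⊤ : ℕ∞) (pder n i f) :=
  (hf.fderiv_right (by simp)).clm_apply contDiff_const

lemma pder_diff (i : Fin n) (hf : ContDiff ℝ (⊤ : ℕ∞) f) : Differentiable ℝ (pder n i f) :=
  (pder_contDiff i hf).differentiable (by simp)

lemma lap_contDiff (hf : ContDiff ℝ (⊤ : ℕ∞) f) : ContDiff ℝ (⊤ : ℕ∞) (lap n f) := by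
  unfold lap; exact ContDiff.sum fun i _ => pder_contDiff i (pder_contDiff i hf)

lemma coord_contDiff (j : Fin n) : ContDiff ℝ (⊤ : ℕ∞) (fun y : Fin n → ℝ => y j) :=
  (ContinuousLinearMap.proj j : (Fin n → ℝ) →L[ℝ] ℝ).contDiff

lemma coord_diff (j : Fin n) : Differentiable ℝ (fun y : Fin n → ℝ => y j) :=
  (coord_contDiff j).differentiable (by simp)

lemma euler_contDiff (hf : ContDiff ℝ (⊤ : ℕ∞) f) : ContDiff ℝ (⊤ : ℕ∞) (euler n f) := by
  unfold euler; exact ContDiff.sum fun i _ => (coord_contDiff i).mul (pder_contDiff i hf)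

lemma normSq_contDiff : ContDiff ℝ (⊤ : ℕ∞) (fun y : Fin n → ℝ => ∑ j, y j ^ 2) :=
  ContDiff.sum fun j _ => (coord_contDiff j).pow 2

lemma pder_add (i : Fin n) (hf : DifferentiableAt ℝ f x) (hg : DifferentiableAt ℝ g x) :
    pder n i (fun y => f y + g y) x = pder n i f x + pder n i g x := by
  unfold pder; rw [fderiv_fun_add hf hg]; simp

lemma pder_const_mul (i : Fin n) (hf : DifferentiableAt ℝ f x) (c : ℝ) :
    pder n i (fun y => c * f y) x = c * pder n i f x := by
  unfold pder; rw [fderiv_const_mul hf c]; simp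

lemma pder_mul (i : Fin n) (hf : DifferentiableAt ℝ f x) (hg : DifferentiableAt ℝ g x) :
    pder n i (fun y => f y * g y) x = pder n i f x * g x + f x * pder n i g x := by
  unfold pder; rw [fderiv_fun_mul hf hg]; simp; ring

lemma pder_sum (i : Fin n) {ι : Type*} (s : Finset ι) (F : ι → (Fin n → ℝ) → ℝ)
    (h : ∀ j ∈ s, DifferentiableAt ℝ (F j) x) :
    pder n i (fun y => ∑ j ∈ s, F j y) x = ∑ j ∈ s, pder n i (F j) x := by
  unfold pder; rw [fderiv_fun_sum h]; simp

lemma pder_coord (i j : Fin n) : pder n i (fun y => y j) x = (Pi.single i 1 : Fin n → ℝ) j := by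
  unfold pder
  rw [show (fun y : Fin n → ℝ => y j) = (ContinuousLinearMap.proj j : (Fin n → ℝ) →L[ℝ] ℝ) from rfl,
    ContinuousLinearMap.fderiv]
  rfl

lemma pder_sq_coord (i j : Fin n) :
    pder n i (fun y : Fin n → ℝ => y j ^ 2) x = 2 * x j * (Pi.single i 1 : Fin n → ℝ) j := by
  have h : (fun y : Fin n → ℝ => y j ^ 2) = fun y => y j * y j := by funext y; ring
  rw [h, pder_mul i (coord_diff j x) (coord_diff j x), pder_coord]
  ring

lemma pder_normSq (i : Fin n) : pder n i (fun y : Fin n → ℝ => ∑ j, y j ^ 2) x = 2 * x i := by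
  rw [pder_sum i Finset.univ (fun j y => y j ^ 2) (fun j _ => ((coord_diff j x).pow 2))]
  rw [Finset.sum_congr rfl fun j _ => pder_sq_coord i j]
  simp [Pi.single_apply]

lemma lap_add (hf : ContDiff ℝ (⊤ : ℕ∞) f) (hg : ContDiff ℝ (⊤ : ℕ∞) g) :
    lap n (fun y => f y + g y) x = lap n f x + lap n g x := by
  unfold lap
  have h1 : ∀ i : Fin n, pder n i (fun y => f y + g y)
      = fun y => pder n i f y + pder n i g y :=
    fun i => funext fun y => pder_add i (hf.differentiable (by simp) y) (hg.differentiable (by simp) y)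
  rw [Finset.sum_congr rfl fun i _ => by
    rw [h1 i, pder_add i (pder_diff i hf x) (pder_diff i hg x)]]
  rw [Finset.sum_add_distrib]

lemma lap_const_mul (hf : ContDiff ℝ (⊤ : ℕ∞) f) (c : ℝ) :
    lap n (fun y => c * f y) x = c * lap n f x := by
  unfold lap
  have h1 : ∀ i : Fin n, pder n i (fun y => c * f y) = fun y => c * pder n i f y :=
    fun i => funext fun y => pder_const_mul i (hf.differentiable (by simp) y) c
  rw [Finset.sum_congr rfl fun i _ => by
    rw [h1 i, pder_const_mul i (pder_diff i hf x) c], ← Finset.mul_sum]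

lemma lap_mul (hf : ContDiff ℝ (⊤ : ℕ∞) f) (hg : ContDiff ℝ (⊤ : ℕ∞) g) :
    lap n (fun y => f y * g y) x
      = lap n f x * g x + 2 * ∑ i, pder n i f x * pder n i g x + f x * lap n g x := by
  unfold lap
  have h1 : ∀ i : Fin n, pder n i (fun y => f y * g y)
      = fun y => pder n i f y * g y + f y * pder n i g y :=
    fun i => funext fun y => pder_mul i (hf.differentiable (by simp) y) (hg.differentiable (by simp) y)
  have key : ∀ i : Fin n, pder n i (pder n i (fun y => f y * g y)) x
      = (pder n i (pder n i f) x * g x + pder n i f x * pder n i g x)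
        + (pder n i f x * pder n i g x + f x * pder n i (pder n i g) x) := by
    intro i
    rw [h1 i, pder_add (f := fun y => pder n i f y * g y) (g := fun y => f y * pder n i g y) i (((pder_diff i hf x).mul (hg.differentiable (by simp) x)))
        ((hf.differentiable (by simp) x).mul (pder_diff i hg x)),
      pder_mul i (pder_diff i hf x) (hg.differentiable (by simp) x),
      pder_mul i (hf.differentiable (by simp) x) (pder_diff i hg x)]
  rw [Finset.sum_congr rfl fun i _ => key i]
  rw [Finset.sum_add_distrib, Finset.sum_add_distrib, Finset.sum_add_distrib,
    ← Finset.sum_mul, ← Finset.mul_sum, Finset.mul_sum]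
  ring_nf

lemma lap_normSq : lap n (fun y : Fin n → ℝ => ∑ j, y j ^ 2) x = 2 * n := by
  unfold lap
  have h1 : ∀ i : Fin n, pder n i (fun y : Fin n → ℝ => ∑ j, y j ^ 2)
      = fun y => 2 * y i := fun i => funext fun y => pder_normSq i
  rw [Finset.sum_congr rfl fun i _ => by
    rw [h1 i, pder_const_mul i (coord_diff i x) 2, pder_coord]]
  simp [mul_comm]

lemma lap_normSq_mul (hf : ContDiff ℝ (⊤ : ℕ∞) f) :
    lap n (fun y => (∑ j, y j ^ 2) * f y) x
      = (∑ j, x j ^ 2) * lap n f x + 4 * euler n f x + 2 * n * f x := by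
  rw [lap_mul normSq_contDiff hf]
  have h2 : ∑ i, pder n i (fun y : Fin n → ℝ => ∑ j, y j ^ 2) x * pder n i f x
      = 2 * euler n f x := by
    unfold euler
    rw [Finset.mul_sum]
    exact Finset.sum_congr rfl fun i _ => by rw [pder_normSq i]; ring
  rw [h2, lap_normSq]
  unfold lap
  ring

lemma pder_fderiv (i j : Fin n) (hf : ContDiff ℝ (⊤ : ℕ∞) f) :
    pder n i (pder n j f) x = fderiv ℝ (fderiv ℝ f) x (Pi.single i 1) (Pi.single j 1) := by
  unfold pder
  rw [fderiv_clm_apply ((hf.fderiv_right (m := (⊤ : ℕ∞)) (by simp)).differentiable (by simp) x)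
    (differentiableAt_const _)]
  simp

lemma pder_comm (i j : Fin n) (hf : ContDiff ℝ (⊤ : ℕ∞) f) :
    pder n i (pder n j f) x = pder n j (pder n i f) x := by
  rw [pder_fderiv i j hf, pder_fderiv j i hf]
  exact (hf.contDiffAt.isSymmSndFDerivAt (by rw [minSmoothness_of_isRCLikeNormedField]; exact WithTop.coe_le_coe.mpr le_top)).eq _ _

lemma pder_lap (i : Fin n) (hf : ContDiff ℝ (⊤ : ℕ∞) f) :
    pder n i (lap n f) x = lap n (pder n i f) x := by
  unfold lap
  rw [pder_sum i Finset.univ _ (fun j _ => (pder_diff j (pder_contDiff j hf) x))]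
  refine Finset.sum_congr rfl fun j _ => ?_
  rw [pder_comm i j (pder_contDiff j hf),
    show pder n i (pder n j f) = pder n j (pder n i f) from
      funext fun y => pder_comm i j hf]

lemma lap_euler (hf : ContDiff ℝ (⊤ : ℕ∞) f) :
    lap n (euler n f) x = euler n (lap n f) x + 2 * lap n f x := by
  have h1 : ∀ (i : Fin n) (y : Fin n → ℝ), pder n i (euler n f) y
      = pder n i f y + ∑ j, y j * pder n i (pder n j f) y := by
    intro i y
    show pder n i (fun y => ∑ j, y j * pder n j f y) y = _
    rw [pder_sum i Finset.univ (fun j y => y j * pder n j f y) (fun j _ => ((coord_diff j y).mul (pder_diff j hf y)))]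
    rw [Finset.sum_congr rfl fun j _ => pder_mul i (coord_diff j y) (pder_diff j hf y)]
    rw [Finset.sum_add_distrib]
    congr 1
    rw [Finset.sum_congr rfl fun j _ => by rw [pder_coord]]
    simp [Pi.single_apply]
  have hs : ∀ i : Fin n, Differentiable ℝ (fun y => ∑ j, y j * pder n i (pder n j f) y) :=
    fun i => Differentiable.fun_sum fun j _ => (coord_diff j).mul (pder_diff i (pder_contDiff j hf))
  have key : ∀ i : Fin n, pder n i (pder n i (euler n f)) x
      = 2 * pder n i (pder n i f) x + ∑ j, x j * pder n i (pder n i (pder n j f)) x := by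
    intro i
    rw [show pder n i (euler n f)
        = fun y => pder n i f y + ∑ j, y j * pder n i (pder n j f) y from funext (h1 i)]
    rw [pder_add i (pder_diff i hf x) (hs i x)]
    rw [pder_sum i Finset.univ (fun j y => y j * pder n i (pder n j f) y)
      (fun j _ => ((coord_diff j x).mul (pder_diff i (pder_contDiff j hf) x)))]
    rw [Finset.sum_congr rfl fun j _ =>
      pder_mul i (coord_diff j x) (pder_diff i (pder_contDiff j hf) x)]
    rw [Finset.sum_add_distrib]
    rw [Finset.sum_congr rfl fun j _ => by rw [pder_coord]]
    simp [Pi.single_apply]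
    ring
  show ∑ i, pder n i (pder n i (euler n f)) x = _
  rw [Finset.sum_congr rfl fun i _ => key i, Finset.sum_add_distrib, ← Finset.mul_sum,
    Finset.sum_comm]
  have h2 : ∀ j : Fin n, ∑ i, x j * pder n i (pder n i (pder n j f)) x
      = x j * pder n j (lap n f) x := by
    intro j
    rw [← Finset.mul_sum,
      show ∑ i, pder n i (pder n i (pder n j f)) x = lap n (pder n j f) x from rfl,
      ← pder_lap j hf]
  rw [Finset.sum_congr rfl fun j _ => h2 j]
  show 2 * lap n f x + ∑ j, x j * pder n j (lap n f) x
      = (∑ j, x j * pder n j (lap n f) x) + 2 * lap n f x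
  ring

lemma lap_iter_contDiff (m : ℕ) (hf : ContDiff ℝ (⊤ : ℕ∞) f) : ContDiff ℝ (⊤ : ℕ∞) ((lap n)^[m] f) := by
  induction m with
  | zero => simpa using hf
  | succ m ih => rw [Function.iterate_succ_apply']; exact lap_contDiff ih

lemma lap_iter_euler (m : ℕ) (hf : ContDiff ℝ (⊤ : ℕ∞) f) :
    (lap n)^[m] (euler n f)
      = fun x => euler n ((lap n)^[m] f) x + 2 * m * (lap n)^[m] f x := by
  induction m with
  | zero => simp
  | succ m ih =>
    funext x
    have hF : ContDiff ℝ (⊤ : ℕ∞) ((lap n)^[m] f) := lap_iter_contDiff m hf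
    rw [Function.iterate_succ_apply', ih,
      lap_add (euler_contDiff hF) (contDiff_const.mul hF),
      lap_const_mul hF (2 * (m : ℝ)), lap_euler hF,
      Function.iterate_succ_apply' (lap n) m f]
    push_cast
    ring

lemma main_aux (n ℓ : ℕ) (hℓ : 1 ≤ ℓ) (f : (Fin n → ℝ) → ℝ) (hf : ContDiff ℝ (⊤ : ℕ∞) f) :
    (lap n)^[ℓ] (fun y => (∑ i, y i ^ 2) * f y)
      = fun x => (∑ i, x i ^ 2) * (lap n)^[ℓ] f x
        + 4 * (ℓ : ℝ) * (lap n)^[ℓ - 1] (euler n f) x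
        + 2 * (ℓ : ℝ) * ((n : ℝ) - 2 * (ℓ : ℝ) + 2) * (lap n)^[ℓ - 1] f x := by
  induction ℓ, hℓ using Nat.le_induction with
  | base =>
    funext x
    simp only [Function.iterate_one, Nat.sub_self, Function.iterate_zero, id_eq, Nat.cast_one]
    rw [lap_normSq_mul hf]
    ring
  | succ ℓ hℓ ih =>
    funext x
    have hF : ContDiff ℝ (⊤ : ℕ∞) ((lap n)^[ℓ] f) := lap_iter_contDiff ℓ hf
    have hG : ContDiff ℝ (⊤ : ℕ∞) ((lap n)^[ℓ - 1] (euler n f)) :=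
      lap_iter_contDiff (ℓ - 1) (euler_contDiff hf)
    have hH : ContDiff ℝ (⊤ : ℕ∞) ((lap n)^[ℓ - 1] f) := lap_iter_contDiff (ℓ - 1) hf
    rw [Function.iterate_succ_apply', ih,
      lap_add ((normSq_contDiff.mul hF).add (contDiff_const.mul hG)) (contDiff_const.mul hH),
      lap_add (normSq_contDiff.mul hF) (contDiff_const.mul hG),
      lap_normSq_mul hF,
      lap_const_mul hG (4 * (ℓ : ℝ)),
      lap_const_mul hH (2 * (ℓ : ℝ) * ((n : ℝ) - 2 * (ℓ : ℝ) + 2)),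
      show lap n ((lap n)^[ℓ - 1] (euler n f)) x = (lap n)^[ℓ] (euler n f) x from by
        rw [← Function.iterate_succ_apply' (lap n) (ℓ - 1), Nat.succ_eq_add_one, Nat.sub_add_cancel hℓ],
      show lap n ((lap n)^[ℓ - 1] f) x = (lap n)^[ℓ] f x from by
        rw [← Function.iterate_succ_apply' (lap n) (ℓ - 1), Nat.succ_eq_add_one, Nat.sub_add_cancel hℓ]]
    have he := congrFun (lap_iter_euler ℓ hf) x
    simp only [Nat.add_sub_cancel]
    rw [Function.iterate_succ_apply' (lap n) ℓ f,
      show euler n ((lap n)^[ℓ] f) x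
          = (lap n)^[ℓ] (euler n f) x - 2 * (ℓ : ℝ) * (lap n)^[ℓ] f x from by
        rw [he]; ring]
    push_cast
    ring

end LapAux

/-- For every positive integer `ℓ` and smooth `f : ℝⁿ → ℝ`,
`Δ^ℓ(|x|² f) = |x|² Δ^ℓ f + 4ℓ Δ^(ℓ-1)(x·∇f) + 2ℓ(n - 2ℓ + 2) Δ^(ℓ-1) f`. -/
theorem lap_iter_normSq_mul (n ℓ : ℕ) (hℓ : 1 ≤ ℓ)
    (f : (Fin n → ℝ) → ℝ) (hf : ContDiff ℝ (⊤ : ℕ∞) f) (x : Fin n → ℝ) :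
    (lap n)^[ℓ] (fun y => (∑ i, y i ^ 2) * f y) x
      = (∑ i, x i ^ 2) * (lap n)^[ℓ] f x
        + 4 * (ℓ : ℝ) * (lap n)^[ℓ - 1] (euler n f) x
        + 2 * (ℓ : ℝ) * ((n : ℝ) - 2 * (ℓ : ℝ) + 2) * (lap n)^[ℓ - 1] f x :=
  congrFun (LapAux.main_aux n ℓ hℓ f hf) x
end

section
/- In ℚ(β)[[x]], Σ_{p=0}^{∞} Σ_{q=0}^{∞} x^(p+2q) χ_p(β) = 1 / ((1 - x)(1 - xβ²)(1 - xβ⁻²)), where χ_p(β) = Σ_{j=-p}^{p} β^(2j). -/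
open scoped BigOperators

/-- The transcendental variable `β` of the field `ℚ(β)` of rational functions. -/
noncomputable def β : RatFunc ℚ := RatFunc.X

/-- The SU(2) character of the spin-`s` representation: `χ_s(β) = Σ_{j=-s}^{s} β^(2j)`. -/
noncomputable def χ (s : ℕ) : RatFunc ℚ :=
  ∑ j ∈ Finset.Icc (-(s : ℤ)) (s : ℤ), β ^ (2 * j)

lemma beta_ne_zero : β ≠ 0 := RatFunc.X_ne_zero

lemma beta_sq_sub_one_ne_zero : (β ^ 2 - 1 : RatFunc ℚ) ≠ 0 := by
  have h : (Polynomial.X ^ 2 - 1 : Polynomial ℚ) ≠ 0 := by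
    intro h
    have := congrArg (Polynomial.coeff · 2) h
    simp [Polynomial.coeff_one] at this
  have := RatFunc.algebraMap_ne_zero h
  simpa [β, map_sub, map_pow, map_one, RatFunc.algebraMap_X] using this

lemma zsplit (m : ℤ) (k : ℕ) : β ^ (m + (k : ℤ)) = β ^ m * β ^ k := by
  rw [zpow_add₀ beta_ne_zero, zpow_natCast]

lemma chi_zero : χ 0 = 1 := by simp [χ]

lemma chi_succ (n : ℕ) :
    χ (n + 1) = β ^ (2 * ((n : ℤ) + 1)) + β ^ (-(2 * ((n : ℤ) + 1))) + χ n := by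
  unfold χ
  have h1 : ((n + 1 : ℕ) : ℤ) = (n : ℤ) + 1 := by push_cast; ring
  rw [h1]
  have h2 : Finset.Icc (-((n : ℤ) + 1)) ((n : ℤ) + 1)
      = insert (-((n : ℤ) + 1)) (insert ((n : ℤ) + 1) (Finset.Icc (-(n : ℤ)) (n : ℤ))) := by
    ext j; simp only [Finset.mem_Icc, Finset.mem_insert]; omega
  have hm1 : -((n : ℤ) + 1) ∉ insert ((n : ℤ) + 1) (Finset.Icc (-(n : ℤ)) (n : ℤ)) := by
    simp only [Finset.mem_insert, Finset.mem_Icc]; omega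
  have hm2 : ((n : ℤ) + 1) ∉ Finset.Icc (-(n : ℤ)) (n : ℤ) := by
    simp only [Finset.mem_Icc]; omega
  rw [h2, Finset.sum_insert hm1, Finset.sum_insert hm2]
  have : 2 * -((n : ℤ) + 1) = -(2 * ((n : ℤ) + 1)) := by ring
  rw [this]; ring

lemma chi_closed (n : ℕ) :
    (β ^ 2 - 1) * χ n = β ^ (2 * (n : ℤ) + 2) - β ^ (-(2 * (n : ℤ))) := by
  induction n with
  | zero =>
    rw [chi_zero]
    have : (2 * ((0 : ℕ) : ℤ) + 2) = ((0 : ℤ) + (2 : ℕ)) := by norm_num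
    rw [this, zsplit]
    simp
  | succ n ih =>
    rw [chi_succ, mul_add, mul_add, ih]
    have hb := beta_ne_zero
    have ht : β ^ (2 * (n : ℤ)) ≠ 0 := zpow_ne_zero _ hb
    have e1 : β ^ (2 * ((n : ℤ) + 1)) = β ^ (2 * (n : ℤ)) * β ^ (2 : ℕ) := by
      rw [show 2 * ((n : ℤ) + 1) = 2 * (n : ℤ) + ((2 : ℕ) : ℤ) by push_cast; ring, zsplit]
    have e2 : β ^ (-(2 * ((n : ℤ) + 1))) = (β ^ (2 * (n : ℤ)) * β ^ (2 : ℕ))⁻¹ := by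
      rw [← e1, zpow_neg]
    have e3 : β ^ (2 * (n : ℤ) + 2) = β ^ (2 * (n : ℤ)) * β ^ (2 : ℕ) := by
      rw [show 2 * (n : ℤ) + 2 = 2 * (n : ℤ) + ((2 : ℕ) : ℤ) by push_cast; ring, zsplit]
    have e4 : β ^ (-(2 * (n : ℤ))) = (β ^ (2 * (n : ℤ)))⁻¹ := zpow_neg β _
    have e5 : β ^ (2 * ((n + 1 : ℕ) : ℤ) + 2) = β ^ (2 * (n : ℤ)) * β ^ (4 : ℕ) := by
      rw [show 2 * ((n + 1 : ℕ) : ℤ) + 2 = 2 * (n : ℤ) + ((4 : ℕ) : ℤ) by push_cast; ring, zsplit]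
    have e6 : β ^ (-(2 * ((n + 1 : ℕ) : ℤ))) = (β ^ (2 * (n : ℤ)) * β ^ (2 : ℕ))⁻¹ := by
      rw [show -(2 * ((n + 1 : ℕ) : ℤ)) = -(2 * (n : ℤ) + ((2 : ℕ) : ℤ)) by push_cast; ring,
        zpow_neg, zsplit]
    rw [e1, e2, e3, e4, e5, e6]
    generalize hg : β ^ (2 * (n : ℤ)) = t at ht ⊢
    field_simp
    ring

lemma chi_rec (n : ℕ) :
    χ (n + 2) + χ n = (β ^ 2 + (β ^ 2)⁻¹) * χ (n + 1) := by
  have hb := beta_ne_zero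
  apply mul_left_cancel₀ beta_sq_sub_one_ne_zero
  rw [mul_add, chi_closed, chi_closed, mul_left_comm, chi_closed]
  have ht : β ^ (2 * (n : ℤ)) ≠ 0 := zpow_ne_zero _ hb
  have e5 : β ^ (2 * ((n + 2 : ℕ) : ℤ) + 2) = β ^ (2 * (n : ℤ)) * β ^ (6 : ℕ) := by
    rw [show 2 * ((n + 2 : ℕ) : ℤ) + 2 = 2 * (n : ℤ) + ((6 : ℕ) : ℤ) by push_cast; ring, zsplit]
  have e6 : β ^ (-(2 * ((n + 2 : ℕ) : ℤ))) = (β ^ (2 * (n : ℤ)) * β ^ (4 : ℕ))⁻¹ := by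
    rw [show -(2 * ((n + 2 : ℕ) : ℤ)) = -(2 * (n : ℤ) + ((4 : ℕ) : ℤ)) by push_cast; ring,
      zpow_neg, zsplit]
  have e3 : β ^ (2 * (n : ℤ) + 2) = β ^ (2 * (n : ℤ)) * β ^ (2 : ℕ) := by
    rw [show 2 * (n : ℤ) + 2 = 2 * (n : ℤ) + ((2 : ℕ) : ℤ) by push_cast; ring, zsplit]
  have e4 : β ^ (-(2 * (n : ℤ))) = (β ^ (2 * (n : ℤ)))⁻¹ := zpow_neg β _
  have e7 : β ^ (2 * ((n + 1 : ℕ) : ℤ) + 2) = β ^ (2 * (n : ℤ)) * β ^ (4 : ℕ) := by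
    rw [show 2 * ((n + 1 : ℕ) : ℤ) + 2 = 2 * (n : ℤ) + ((4 : ℕ) : ℤ) by push_cast; ring, zsplit]
  have e8 : β ^ (-(2 * ((n + 1 : ℕ) : ℤ))) = (β ^ (2 * (n : ℤ)) * β ^ (2 : ℕ))⁻¹ := by
    rw [show -(2 * ((n + 1 : ℕ) : ℤ)) = -(2 * (n : ℤ) + ((2 : ℕ) : ℤ)) by push_cast; ring,
      zpow_neg, zsplit]
  rw [e5, e6, e3, e4, e7, e8]
  generalize hg : β ^ (2 * (n : ℤ)) = t at ht ⊢
  field_simp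
  ring

open PowerSeries

lemma step_A : ((1 : (RatFunc ℚ)⟦X⟧) - X ^ 2) *
    (PowerSeries.mk fun r => ∑ q ∈ Finset.range (r / 2 + 1), χ (r - 2 * q))
    = PowerSeries.mk χ := by
  ext r
  rw [sub_mul, one_mul, map_sub, mul_comm ((X : (RatFunc ℚ)⟦X⟧) ^ 2),
    PowerSeries.coeff_mul_X_pow']
  simp only [PowerSeries.coeff_mk]
  rcases lt_or_ge r 2 with h | h
  · rw [if_neg (by omega)]
    interval_cases r <;> simp [Finset.sum_range_succ]
  · rw [if_pos h]
    obtain ⟨m, rfl⟩ : ∃ m, r = m + 2 := ⟨r - 2, by omega⟩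
    have h1 : (m + 2) / 2 + 1 = (m / 2 + 1) + 1 := by omega
    have h2 : m + 2 - 2 = m := by omega
    rw [h1, h2, Finset.sum_range_succ']
    have h3 : ∀ i ∈ Finset.range (m / 2 + 1),
        χ (m + 2 - 2 * (i + 1)) = χ (m - 2 * i) := by
      intro i _; congr 1; omega
    rw [Finset.sum_congr rfl h3]
    simp

lemma chi_one : χ 1 = β ^ 2 + (β ^ 2)⁻¹ + 1 := by
  have h : Finset.Icc (-(1 : ℤ)) 1 = {-1, 0, 1} := by decide
  unfold χ
  push_cast
  rw [h]
  rw [Finset.sum_insert (by decide), Finset.sum_insert (by decide), Finset.sum_singleton]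
  have e1 : β ^ (2 * (-1 : ℤ)) = (β ^ (2 : ℕ))⁻¹ := by
    rw [show 2 * (-1 : ℤ) = -(((2 : ℕ) : ℤ)) by norm_num, zpow_neg, zpow_natCast]
  have e2 : β ^ (2 * (1 : ℤ)) = β ^ (2 : ℕ) := by
    rw [show 2 * (1 : ℤ) = ((2 : ℕ) : ℤ) by norm_num, zpow_natCast]
  rw [e1, e2]
  simp
  ring

lemma step_B : ((1 : (RatFunc ℚ)⟦X⟧) - X * C (β ^ 2))
    * (1 - X * C ((β ^ 2)⁻¹)) * PowerSeries.mk χ = 1 + X := by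
  have hab : (β ^ 2) * (β ^ 2)⁻¹ = 1 := mul_inv_cancel₀ (pow_ne_zero 2 beta_ne_zero)
  have hprod : ((1 : (RatFunc ℚ)⟦X⟧) - X * C (β ^ 2))
      * (1 - X * C ((β ^ 2)⁻¹))
      = 1 - X * C (β ^ 2 + (β ^ 2)⁻¹) + X ^ 2 := by
    have : ((1 : (RatFunc ℚ)⟦X⟧) - X * C (β ^ 2))
        * (1 - X * C ((β ^ 2)⁻¹))
        = 1 - X * (C (β ^ 2) + C ((β ^ 2)⁻¹))
          + X ^ 2 * (C (β ^ 2) * C ((β ^ 2)⁻¹)) := by ring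
    rw [this, ← map_mul, hab, map_one, mul_one, ← map_add]
  rw [hprod]
  ext r
  rw [sub_add, sub_mul, one_mul, sub_mul, map_sub, map_sub]
  have hA : (X : (RatFunc ℚ)⟦X⟧) * C (β ^ 2 + (β ^ 2)⁻¹) * PowerSeries.mk χ
      = (C (β ^ 2 + (β ^ 2)⁻¹) * PowerSeries.mk χ) * X ^ 1 := by ring
  have hB : ((X : (RatFunc ℚ)⟦X⟧) ^ 2) * PowerSeries.mk χ = (PowerSeries.mk χ) * X ^ 2 := by
    ring
  rw [hA, hB, PowerSeries.coeff_mul_X_pow', PowerSeries.coeff_mul_X_pow']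
  rw [PowerSeries.coeff_C_mul]
  simp only [PowerSeries.coeff_mk, map_add, PowerSeries.coeff_one, PowerSeries.coeff_X]
  match r with
  | 0 => simp [chi_zero]
  | 1 => simp [chi_one, chi_zero]
  | (m + 2) =>
    have h1 : ¬ (m + 2 = 0) := by omega
    have h2 : ¬ (m + 2 = 1) := by omega
    have h3 : (1 : ℕ) ≤ m + 2 := by omega
    have h4 : (2 : ℕ) ≤ m + 2 := by omega
    rw [if_pos h3, if_pos h4, if_neg h1, if_neg h2]
    have e1 : m + 2 - 1 = m + 1 := by omega
    have e2 : m + 2 - 2 = m := by omega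
    rw [e1, e2]
    have := chi_rec m
    linear_combination this

/-- In `ℚ(β)[[x]]`: `Σ_{p≥0} Σ_{q≥0} x^(p+2q) χ_p(β) = 1/((1-x)(1-xβ²)(1-xβ⁻²))`.
The coefficient of `x^r` in the double sum is `Σ_{q=0}^{⌊r/2⌋} χ_{r-2q}(β)`. -/
theorem verma_character :
    (PowerSeries.mk fun r => ∑ q ∈ Finset.range (r / 2 + 1), χ (r - 2 * q))
      = ((1 - PowerSeries.X)
        * (1 - PowerSeries.X * PowerSeries.C (β ^ 2))
        * (1 - PowerSeries.X * PowerSeries.C ((β ^ 2)⁻¹)))⁻¹ := by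
  rw [PowerSeries.eq_inv_iff_mul_eq_one]
  · have h1X : ((1 : (RatFunc ℚ)⟦X⟧) + X) ≠ 0 := by
      intro h
      have := congrArg (PowerSeries.constantCoeff) h
      simpa using this
    apply mul_left_cancel₀ h1X
    rw [mul_one]
    have key : ((1 : (RatFunc ℚ)⟦X⟧) + X) *
        ((PowerSeries.mk fun r => ∑ q ∈ Finset.range (r / 2 + 1), χ (r - 2 * q))
          * ((1 - PowerSeries.X)
            * (1 - PowerSeries.X * PowerSeries.C (β ^ 2))
            * (1 - PowerSeries.X * PowerSeries.C ((β ^ 2)⁻¹))))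
        = (1 - PowerSeries.X * PowerSeries.C (β ^ 2))
          * (1 - PowerSeries.X * PowerSeries.C ((β ^ 2)⁻¹))
          * ((1 - PowerSeries.X ^ 2) *
            (PowerSeries.mk fun r => ∑ q ∈ Finset.range (r / 2 + 1), χ (r - 2 * q))) := by
      ring
    rw [key, step_A, step_B]
  · simp
end

section
/- For every positive integer ℓ, in ℚ(β)[[x]]: Σ_{p=0}^{∞} Σ_{q=0}^{ℓ-1} x^(p+2q) χ_p(β) = (1 - x^(2ℓ)) / ((1 - x)(1 - xβ²)(1 - xβ⁻²)), where χ_p(β) = Σ_{j=-p}^{p} β^(2j). -/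
open scoped BigOperators

open PowerSeries

noncomputable abbrev bb : RatFunc ℚ := β ^ 2

lemma hb0 : bb ≠ 0 := pow_ne_zero _ RatFunc.X_ne_zero

lemma chi_succ_s13 (n : ℕ) :
    χ (n + 1) = χ n + bb ^ (n + 1) + (bb⁻¹) ^ (n + 1) := by
  have hset : Finset.Icc (-((n:ℤ)+1)) ((n:ℤ)+1)
      = insert ((n:ℤ)+1) (insert (-((n:ℤ)+1)) (Finset.Icc (-(n:ℤ)) (n:ℤ))) := by
    ext j; simp only [Finset.mem_Icc, Finset.mem_insert]; omega
  have h1 : ((n:ℤ)+1) ∉ insert (-((n:ℤ)+1)) (Finset.Icc (-(n:ℤ)) (n:ℤ)) := by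
    simp only [Finset.mem_insert, Finset.mem_Icc]; omega
  have h2 : (-((n:ℤ)+1)) ∉ Finset.Icc (-(n:ℤ)) (n:ℤ) := by
    simp only [Finset.mem_Icc]; omega
  have hpow : β ^ (2 * ((n:ℤ)+1)) = bb ^ (n+1) := by
    have : (2 * ((n:ℤ)+1)) = ((2*(n+1) : ℕ) : ℤ) := by push_cast; ring
    rw [this, zpow_natCast, pow_mul]
  have hpow' : β ^ (2 * (-((n:ℤ)+1))) = (bb⁻¹) ^ (n+1) := by
    have : (2 * (-((n:ℤ)+1))) = -((2*(n+1) : ℕ) : ℤ) := by push_cast; ring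
    rw [this, zpow_neg, zpow_natCast, pow_mul, inv_pow]
  have : χ (n+1) = ∑ j ∈ Finset.Icc (-((n:ℤ)+1)) ((n:ℤ)+1), β ^ (2 * j) := by
    have hc : ((n+1:ℕ):ℤ) = (n:ℤ)+1 := by push_cast; ring
    unfold χ; rw [hc]
  rw [this, hset, Finset.sum_insert h1, Finset.sum_insert h2, hpow, hpow']
  unfold χ; ring

/-- geometric series -/
lemma geom (c : RatFunc ℚ) :
    (PowerSeries.mk fun n => c ^ n) * (1 - X * C c) = 1 := by
  ext n
  rw [mul_sub, mul_one, map_sub, mul_comm X, ← mul_assoc, ← pow_one X,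
    PowerSeries.coeff_mul_X_pow']
  cases n with
  | zero => simp
  | succ m => simp [pow_succ, mul_comm, PowerSeries.coeff_one]

noncomputable def B : PowerSeries (RatFunc ℚ) :=
  PowerSeries.mk fun n => if n = 0 then 1 else bb ^ n + (bb⁻¹) ^ n

lemma hB : B = (PowerSeries.mk fun n => bb ^ n) + (PowerSeries.mk fun n => (bb⁻¹) ^ n) - 1 := by
  ext n
  cases n with
  | zero => simp [B]
  | succ m => simp [B, PowerSeries.coeff_one]

lemma step1 : (PowerSeries.mk χ) * (1 - X) = B := by
  ext n
  rw [mul_sub, mul_one, map_sub, ← pow_one X, PowerSeries.coeff_mul_X_pow']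
  cases n with
  | zero => simp [B, χ]
  | succ m =>
    simp only [B, PowerSeries.coeff_mk, Nat.succ_sub_one, if_pos (Nat.one_le_iff_ne_zero.mpr (Nat.succ_ne_zero m)), Nat.succ_ne_zero, if_false]
    rw [chi_succ_s13 m]; ring

lemma step2 : B * ((1 - X * C bb) * (1 - X * C (bb⁻¹))) = 1 - X ^ 2 := by
  have hinv : C bb * C (bb⁻¹) = 1 := by
    rw [← map_mul, mul_inv_cancel₀ hb0, map_one]
  rw [hB]
  have g1 := geom bb
  have g2 := geom (bb⁻¹)
  calc ((PowerSeries.mk fun n => bb ^ n) + (PowerSeries.mk fun n => (bb⁻¹) ^ n) - 1)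
        * ((1 - X * C bb) * (1 - X * C (bb⁻¹)))
      = ((PowerSeries.mk fun n => bb ^ n) * (1 - X * C bb)) * (1 - X * C (bb⁻¹))
        + ((PowerSeries.mk fun n => (bb⁻¹) ^ n) * (1 - X * C (bb⁻¹))) * (1 - X * C bb)
        - (1 - X * C bb) * (1 - X * C (bb⁻¹)) := by ring
    _ = 1 - X ^ 2 := by
        rw [g1, g2, one_mul, one_mul]
        have : (1 - X * C bb) * (1 - X * C (bb⁻¹))
            = 1 - X * C bb - X * C (bb⁻¹)
              + X ^ 2 * (C bb * C (bb⁻¹)) := by ring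
        rw [this, hinv]; ring

/-- In `ℚ(β)[[x]]`: for `ℓ ≥ 1`,
`Σ_{p≥0} Σ_{q=0}^{ℓ-1} x^(p+2q) χ_p(β) = (1 - x^(2ℓ))/((1-x)(1-xβ²)(1-xβ⁻²))`.
The coefficient of `x^r` in the double sum is `Σ_{q < ℓ, 2q ≤ r} χ_{r-2q}(β)`. -/
theorem singleton_character (ℓ : ℕ) (hℓ : 1 ≤ ℓ) :
    (PowerSeries.mk fun r =>
        ∑ q ∈ (Finset.range ℓ).filter (fun q => 2 * q ≤ r), χ (r - 2 * q))
      = (1 - PowerSeries.X ^ (2 * ℓ))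
        * (((1 - PowerSeries.X)
          * (1 - PowerSeries.X * PowerSeries.C (β ^ 2))
          * (1 - PowerSeries.X * PowerSeries.C ((β ^ 2)⁻¹)))⁻¹) := by
  set D := (1 - X) * (1 - X * C (β ^ 2)) * (1 - X * C ((β ^ 2)⁻¹)) with hD
  have hDc : constantCoeff D ≠ 0 := by
    simp [hD]
  rw [PowerSeries.eq_mul_inv_iff_mul_eq hDc]
  -- LHS as product
  have hS : (PowerSeries.mk fun r =>
        ∑ q ∈ (Finset.range ℓ).filter (fun q => 2 * q ≤ r), χ (r - 2 * q))
      = (PowerSeries.mk χ) * (∑ q ∈ Finset.range ℓ, X ^ (2 * q)) := by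
    ext r
    rw [Finset.mul_sum, map_sum, PowerSeries.coeff_mk, Finset.sum_filter]
    congr 1; ext q
    rw [PowerSeries.coeff_mul_X_pow']
    split <;> simp [PowerSeries.coeff_mk]
  have hgeom : (∑ q ∈ Finset.range ℓ, X ^ (2 * q)) * (1 - X ^ 2)
      = 1 - (X : PowerSeries (RatFunc ℚ)) ^ (2 * ℓ) := by
    have := geom_sum_mul ((X : PowerSeries (RatFunc ℚ)) ^ 2) ℓ
    have h2 : ∀ q, ((X : PowerSeries (RatFunc ℚ)) ^ 2) ^ q = X ^ (2 * q) := fun q => by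
      rw [← pow_mul]
    calc (∑ q ∈ Finset.range ℓ, (X: PowerSeries (RatFunc ℚ)) ^ (2 * q)) * (1 - X ^ 2)
        = -((∑ q ∈ Finset.range ℓ, ((X: PowerSeries (RatFunc ℚ)) ^ 2) ^ q) * (X ^ 2 - 1)) := by
          simp_rw [h2]; ring
      _ = 1 - X ^ (2 * ℓ) := by rw [this, ← pow_mul]; ring
  calc (PowerSeries.mk fun r =>
        ∑ q ∈ (Finset.range ℓ).filter (fun q => 2 * q ≤ r), χ (r - 2 * q)) * D
      = ((PowerSeries.mk χ) * (1 - X)) * ((1 - X * C bb) * (1 - X * C (bb⁻¹)))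
          * (∑ q ∈ Finset.range ℓ, X ^ (2 * q)) := by rw [hS, hD]; ring
    _ = (∑ q ∈ Finset.range ℓ, X ^ (2 * q)) * (1 - X ^ 2) := by rw [step1, step2]; ring
    _ = 1 - X ^ (2 * ℓ) := hgeom
end
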